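/- Let 2 < γ < 3, γ/2 − 1 < s < γ − 2, N ≥ 2, and let m be the I-method multiplier of order 1−s with threshold N. Then for all dyadic N₃ ≥ N₄ with N₃ ≥ N₄ ≳ N, one has m(N₃) N₃ · m(N₄) N₄^{3-γ} ≥ c N^{4-γ-ε} N₃^{ε} for any small ε ∈ (0, 4−γ−1) and some constant c > 0 depending only on ε, γ, s. In particular, since 4 − γ > 1, this quantity dominates N^{1-ε} N₃^{ε}. -/

import Mathlib

/-!
Below `2N` the multiplier is at least its value `2^{-(1-s)}` at `2N`, so `m(r) ≳ (N/r)^{1-s}` for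
every `r ≥ N`. Since `3 - γ ≤ 1 - s`, the profile `r ↦ (N/r)^{1-s} r^{3-γ}` is nonincreasing, so
`N₄` may be replaced by `N₃`; what remains is `N^{2(1-s)} N₃^{2s+2-γ}`, and the spare power
`N₃^{2s+2-γ-ε} ≥ N^{2s+2-γ-ε}` because that exponent is nonnegative.
-/

open Real

lemma multiplier_lower_bound {m : ℝ → ℝ} {N a r : ℝ} (ha : 0 ≤ a) (hN : 0 < N)
    (hhigh : ∀ r : ℝ, 2 * N ≤ r → m r = (N / r) ^ a)
    (hmono : ∀ r₁ r₂ : ℝ, 0 ≤ r₁ → r₁ ≤ r₂ → m r₂ ≤ m r₁) (hr : N ≤ r) :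
    (1 / 2) ^ a * (N / r) ^ a ≤ m r := by
  have hr₀ : 0 < r := hN.trans_le hr
  have hhalf : (1 / 2 : ℝ) ^ a ≤ 1 := rpow_le_one (by norm_num) (by norm_num) ha
  by_cases hfar : 2 * N ≤ r
  · rw [hhigh r hfar]
    exact mul_le_of_le_one_left (by positivity) hhalf
  · have hm₂ : m (2 * N) = (1 / 2) ^ a := by
      rw [hhigh (2 * N) le_rfl]
      congr 1
      field_simp
    calc (1 / 2) ^ a * (N / r) ^ a
        ≤ (1 / 2) ^ a := mul_le_of_le_one_right (by positivity)
          (rpow_le_one (by positivity) ((div_le_one hr₀).2 hr) ha)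
      _ = m (2 * N) := hm₂.symm
      _ ≤ m r := hmono r (2 * N) hr₀.le (not_le.1 hfar).le

lemma div_rpow_mul_rpow_le_of_le {N r₁ r₂ a b : ℝ} (hN : 0 ≤ N) (hr₁ : 0 < r₁) (hr : r₁ ≤ r₂)
    (hba : b ≤ a) : (N / r₂) ^ a * r₂ ^ b ≤ (N / r₁) ^ a * r₁ ^ b := by
  have profile : ∀ r : ℝ, 0 < r → (N / r) ^ a * r ^ b = N ^ a * r ^ (b - a) := fun r hr => by
    rw [div_rpow hN hr.le, rpow_sub hr]
    ring
  rw [profile r₁ hr₁, profile r₂ (hr₁.trans_le hr)]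
  exact mul_le_mul_of_nonneg_left (rpow_le_rpow_of_nonpos hr₁ hr (sub_nonpos.2 hba))
    (rpow_nonneg hN a)

lemma rpow_mul_rpow_le_div_rpow_mul {N R₃ R₄ a b ε : ℝ} (hN : 0 < N) (hN₄ : N ≤ R₄)
    (h₄₃ : R₄ ≤ R₃) (hba : b ≤ a) (hε : ε ≤ 1 + b - 2 * a) :
    N ^ (1 + b - ε) * R₃ ^ ε ≤ (N / R₃) ^ a * R₃ * ((N / R₄) ^ a * R₄ ^ b) := by
  have hR₄ : 0 < R₄ := hN.trans_le hN₄
  have hR₃ : 0 < R₃ := hR₄.trans_le h₄₃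
  calc N ^ (1 + b - ε) * R₃ ^ ε
      = N ^ (2 * a) * (N ^ (1 + b - 2 * a - ε) * R₃ ^ ε) := by
        rw [← mul_assoc, ← rpow_add hN]
        ring_nf
    _ ≤ N ^ (2 * a) * (R₃ ^ (1 + b - 2 * a - ε) * R₃ ^ ε) := by
        gcongr N ^ _ * (?_ * _)
        exact rpow_le_rpow hN.le (hN₄.trans h₄₃) (by linarith)
    _ = (N / R₃) ^ a * R₃ * ((N / R₃) ^ a * R₃ ^ b) := by
        rw [← rpow_add hR₃, div_rpow hN.le hR₃.le,
          show 1 + b - 2 * a - ε + ε = 1 + b - (a + a) by ring, two_mul, rpow_add hN,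
          rpow_sub hR₃, rpow_add hR₃, rpow_add hR₃, rpow_one]
        field_simp
    _ ≤ (N / R₃) ^ a * R₃ * ((N / R₄) ^ a * R₄ ^ b) :=
        mul_le_mul_of_nonneg_left (div_rpow_mul_rpow_le_of_le hN.le hR₄ h₄₃ hba) (by positivity)

theorem stmt_5_general (γ s : ℝ) (hγ3 : γ < 3)
    (hsu : s < γ - 2)
    (ε : ℝ) (hεs : ε ≤ 2 * s + 2 - γ) :
    ∃ c : ℝ, 0 < c ∧
      ∀ (N : ℝ), 2 ≤ N →
      ∀ m : ℝ → ℝ,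
        (∀ r : ℝ, r ≤ N → m r = 1) →
        (∀ r : ℝ, 2 * N ≤ r → m r = (N / r) ^ (1 - s)) →
        (∀ r₁ r₂ : ℝ, 0 ≤ r₁ → r₁ ≤ r₂ → m r₂ ≤ m r₁) →
      ∀ N₃ N₄ : ℝ, N ≤ N₄ → N₄ ≤ N₃ →
        c * N ^ (4 - γ - ε) * N₃ ^ ε ≤ m N₃ * N₃ * (m N₄ * N₄ ^ (3 - γ)) ∧
        c * N ^ (1 - ε) * N₃ ^ ε ≤ m N₃ * N₃ * (m N₄ * N₄ ^ (3 - γ)) := by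
  have ha : 0 ≤ 1 - s := by linarith
  refine ⟨(1 / 2) ^ (1 - s) * (1 / 2) ^ (1 - s), by positivity, ?_⟩
  intro N hN m _ hhigh hmono N₃ N₄ hN₄ h₄₃
  have hN₀ : 0 < N := by linarith
  have hN₄₀ : 0 < N₄ := by linarith
  have hN₃₀ : 0 < N₃ := by linarith
  have h₃ := multiplier_lower_bound ha hN₀ hhigh hmono (hN₄.trans h₄₃)
  have h₄ := multiplier_lower_bound ha hN₀ hhigh hmono hN₄
  have powers := rpow_mul_rpow_le_div_rpow_mul (a := 1 - s) (b := 3 - γ) (ε := ε)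
    hN₀ hN₄ h₄₃ (by linarith) (by linarith)
  rw [show 1 + (3 - γ) - ε = 4 - γ - ε by ring] at powers
  have hm₃ : 0 ≤ m N₃ := le_trans (by positivity) h₃
  have key : (1 / 2) ^ (1 - s) * (1 / 2) ^ (1 - s) * N ^ (4 - γ - ε) * N₃ ^ ε
      ≤ m N₃ * N₃ * (m N₄ * N₄ ^ (3 - γ)) :=
    calc _ ≤ (1 / 2) ^ (1 - s) * (1 / 2) ^ (1 - s)
            * ((N / N₃) ^ (1 - s) * N₃ * ((N / N₄) ^ (1 - s) * N₄ ^ (3 - γ))) := by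
          rw [mul_assoc _ (N ^ _)]
          gcongr
      _ = (1 / 2) ^ (1 - s) * (N / N₃) ^ (1 - s) * N₃
            * ((1 / 2) ^ (1 - s) * (N / N₄) ^ (1 - s) * N₄ ^ (3 - γ)) := by ring
      _ ≤ m N₃ * N₃ * (m N₄ * N₄ ^ (3 - γ)) := by gcongr
  refine ⟨key, le_trans ?_ key⟩
  gcongr
  · linarith
  · linarith

/-- Case 3a (subcase `γ/2 − 1 < s < γ − 2`) frequency inequality:
`m(N₃) N₃ · m(N₄) N₄^{3-γ} ≥ c N^{4-γ-ε} N₃^{ε}`, which in particular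
dominates `N^{1-ε} N₃^{ε}` since `4 − γ > 1`. -/
theorem stmt_5 (γ s : ℝ) (hγ2 : 2 < γ) (hγ3 : γ < 3)
    (hsl : γ / 2 - 1 < s) (hsu : s < γ - 2)
    (ε : ℝ) (hε0 : 0 < ε) (hεs : ε ≤ 2 * s + 2 - γ) (hεγ : ε < 4 - γ - 1) :
    ∃ c : ℝ, 0 < c ∧
      ∀ (N : ℝ), 2 ≤ N →
      ∀ m : ℝ → ℝ,
        (∀ r : ℝ, r ≤ N → m r = 1) →
        (∀ r : ℝ, 2 * N ≤ r → m r = (N / r) ^ (1 - s)) →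
        (∀ r₁ r₂ : ℝ, 0 ≤ r₁ → r₁ ≤ r₂ → m r₂ ≤ m r₁) →
      ∀ N₃ N₄ : ℝ, N ≤ N₄ → N₄ ≤ N₃ →
        c * N ^ (4 - γ - ε) * N₃ ^ ε ≤ m N₃ * N₃ * (m N₄ * N₄ ^ (3 - γ)) ∧
        c * N ^ (1 - ε) * N₃ ^ ε ≤ m N₃ * N₃ * (m N₄ * N₄ ^ (3 - γ)) :=
  stmt_5_general γ s hγ3 hsu ε hεs
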